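/- arXiv:1403.7414 — 2 statements merged into one kernel-verified Lean document; each statement's English description precedes it below -/
import Mathlib

section
/- Let N ≥ 3, λ > 0, C > 0, and define u_λ : ℝ^N → ℝ by u_λ(x) = C (λ/(λ² + |x|²))^{N/2}. Then ∫_{ℝ^N} |∇u_λ(x)|² dx = (N²(N-2)/(4(N+1))) · ∫_{ℝ^N} |u_λ(x)|²/|x|² dx. -/
/-!
Both integrands are radial. With `s = λ² + |x|²` one has `|∇u|² = C²N²λᴺ |x|² s^(-(N+2))` and
`u²/|x|² = C²λᴺ |x|^(-2) s^(-N)`, so polar coordinates turn both sides into multiples of integrals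
`∫₀^∞ r^a (c + r²)^(-b) dr`. Integrating the derivative of `r^(a+1) (c + r²)^(-b)` over `(0, ∞)`
gives the reduction `∫ r^(a+2) (c + r²)^(-(b+1)) = (a+1)/(2b) ∫ r^a (c + r²)^(-b)`; applied with
`(a, b) = (N-3, N)` and `(N-1, N+1)` it contributes the factor `(N-2)/(2N) · N/(2(N+1))`.
-/

open MeasureTheory Set Filter Topology

theorem sq_rpow_natCast_div_two {q : ℝ} (hq : 0 ≤ q) (n : ℕ) :
    (q ^ ((n : ℝ) / 2)) ^ 2 = q ^ n := by
  rw [← Real.rpow_natCast _ 2, ← Real.rpow_mul hq]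
  norm_num

section Bubble

variable {E : Type*} [NormedAddCommGroup E] [InnerProductSpace ℝ E] [CompleteSpace E] {lam : ℝ}

theorem HasDerivAt.hasGradientAt_comp_norm_sq {g : ℝ → ℝ} {g' : ℝ} {x : E}
    (hg : HasDerivAt g g' (‖x‖ ^ 2)) :
    HasGradientAt (fun y => g (‖y‖ ^ 2)) ((2 * g') • x) x := by
  have hdual : InnerProductSpace.toDual ℝ E ((2 * g') • x) = g' • (2 • innerSL ℝ x) := by
    ext y
    simp only [map_smul, smul_apply, InnerProductSpace.toDual_apply_apply,
      smul_eq_mul, two_smul, add_apply, innerSL_apply_apply]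
    ring
  rw [hasGradientAt_iff_hasFDerivAt, hdual]
  exact hg.comp_hasFDerivAt x (hasStrictFDerivAt_norm_sq x).hasFDerivAt

theorem sq_bubble (hlam : 0 < lam) (C : ℝ) (N : ℕ) (r : ℝ) :
    (C * (lam / (lam ^ 2 + r ^ 2)) ^ ((N : ℝ) / 2)) ^ 2
      = C ^ 2 * lam ^ N * ((lam ^ 2 + r ^ 2)⁻¹) ^ N := by
  rw [mul_pow, sq_rpow_natCast_div_two (by positivity), div_pow, div_eq_mul_inv, inv_pow]
  ring

theorem norm_gradient_bubble_sq (hlam : 0 < lam) (C : ℝ) (N : ℕ) (x : E) :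
    ‖gradient (fun y : E => C * (lam / (lam ^ 2 + ‖y‖ ^ 2)) ^ ((N : ℝ) / 2)) x‖ ^ 2
      = C ^ 2 * N ^ 2 * lam ^ N * (‖x‖ ^ 2 * ((lam ^ 2 + ‖x‖ ^ 2)⁻¹) ^ (N + 2)) := by
  set p : ℝ := (N : ℝ) / 2
  set s : ℝ := lam ^ 2 + ‖x‖ ^ 2
  have hs : 0 < s := by positivity
  have hprofile : (fun y : E => C * (lam / (lam ^ 2 + ‖y‖ ^ 2)) ^ p)
      = fun y => C * lam ^ p * (lam ^ 2 + ‖y‖ ^ 2) ^ (-p) := by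
    funext y
    rw [Real.div_rpow hlam.le (by positivity), Real.rpow_neg (by positivity)]
    ring
  -- exponent written as `(N + 2) / 2` so that squaring it gives a natural power
  have hderiv : HasDerivAt (fun t => C * lam ^ p * (lam ^ 2 + t) ^ (-p))
      (C * lam ^ p * (-p * (s ^ (((N + 2 : ℕ) : ℝ) / 2))⁻¹)) (‖x‖ ^ 2) := by
    have h := (((hasDerivAt_id (‖x‖ ^ 2)).const_add (lam ^ 2)).rpow_const (p := -p)
      (Or.inl hs.ne')).const_mul (C * lam ^ p)
    have hexp : s ^ (-p - 1) = (s ^ (((N + 2 : ℕ) : ℝ) / 2))⁻¹ := by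
      rw [← Real.rpow_neg hs.le]
      congr 1
      simp only [p]
      push_cast
      ring
    simp only [id, one_mul] at h
    rwa [hexp] at h
  rw [hprofile, hderiv.hasGradientAt_comp_norm_sq.gradient, norm_smul, mul_pow,
    Real.norm_eq_abs, sq_abs]
  calc (2 * (C * lam ^ p * (-p * (s ^ (((N + 2 : ℕ) : ℝ) / 2))⁻¹))) ^ 2 * ‖x‖ ^ 2
      = C ^ 2 * (2 * p) ^ 2 * (lam ^ p) ^ 2 * ((s ^ (((N + 2 : ℕ) : ℝ) / 2)) ^ 2)⁻¹
          * ‖x‖ ^ 2 := by ring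
    _ = _ := by
      rw [sq_rpow_natCast_div_two hlam.le, sq_rpow_natCast_div_two hs.le, ← inv_pow]
      ring

end Bubble

section RadialIntegrals

variable {c : ℝ}

theorem pow_mul_inv_add_sq_pow_le (hc : 0 ≤ c) {r : ℝ} (hr : 0 < r) {a b : ℕ}
    (hab : a ≤ 2 * b) : r ^ a * ((c + r ^ 2)⁻¹) ^ b ≤ (r ^ (2 * b - a))⁻¹ := by
  have hsplit : r ^ (2 * b) = r ^ a * r ^ (2 * b - a) := by rw [← pow_add]; congr 1; omega
  calc r ^ a * ((c + r ^ 2)⁻¹) ^ b ≤ r ^ a * ((r ^ 2)⁻¹) ^ b := by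
        gcongr
        exact le_add_of_nonneg_left hc
    _ = (r ^ (2 * b - a))⁻¹ := by
        rw [inv_pow, ← pow_mul, hsplit]
        field_simp

theorem continuous_pow_mul_inv_add_sq_pow (hc : 0 < c) (a b : ℕ) :
    Continuous fun r : ℝ => r ^ a * ((c + r ^ 2)⁻¹) ^ b :=
  (continuous_pow a).mul
    (((continuous_const.add (continuous_pow 2)).inv₀ fun r =>
      (add_pos_of_pos_of_nonneg hc (sq_nonneg r)).ne').pow b)

theorem tendsto_pow_mul_inv_add_sq_pow_atTop (hc : 0 ≤ c) {a b : ℕ} (hab : a < 2 * b) :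
    Tendsto (fun r : ℝ => r ^ a * ((c + r ^ 2)⁻¹) ^ b) atTop (𝓝 0) := by
  refine squeeze_zero' ?_ ?_
    ((tendsto_pow_atTop (n := 2 * b - a) (by omega)).inv_tendsto_atTop)
  · filter_upwards [eventually_ge_atTop 0] with r hr
    positivity
  · filter_upwards [eventually_gt_atTop 0] with r hr
    exact pow_mul_inv_add_sq_pow_le hc hr hab.le

theorem integrableOn_Ioi_pow_mul_inv_add_sq_pow (hc : 0 < c) {a b : ℕ} (hab : a + 2 ≤ 2 * b) :
    IntegrableOn (fun r : ℝ => r ^ a * ((c + r ^ 2)⁻¹) ^ b) (Ioi 0) := by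
  have hcont := continuous_pow_mul_inv_add_sq_pow hc a b
  rw [← Ioc_union_Ioi_eq_Ioi zero_le_one]
  refine hcont.integrableOn_Ioc.union <|
    (integrableOn_Ioi_rpow_of_lt (by norm_num : (-2 : ℝ) < -1) one_pos).mono'
      hcont.aestronglyMeasurable.restrict ?_
  filter_upwards [ae_restrict_mem measurableSet_Ioi] with r (hr : 1 < r)
  rw [Real.norm_of_nonneg (by positivity), Real.rpow_neg (by positivity)]
  calc r ^ a * ((c + r ^ 2)⁻¹) ^ b ≤ (r ^ (2 * b - a))⁻¹ :=
        pow_mul_inv_add_sq_pow_le hc.le (by positivity) (by omega)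
    _ ≤ (r ^ (2 : ℝ))⁻¹ := by
        rw [Real.rpow_two]
        gcongr
        exacts [hr.le, by omega]

theorem hasDerivAt_pow_succ_mul_inv_add_sq_pow (hc : 0 < c) (a b : ℕ) (r : ℝ) :
    HasDerivAt (fun r : ℝ => r ^ (a + 1) * ((c + r ^ 2)⁻¹) ^ (b + 1))
      ((a + 1) * (r ^ a * ((c + r ^ 2)⁻¹) ^ (b + 1))
        - 2 * (b + 1) * (r ^ (a + 2) * ((c + r ^ 2)⁻¹) ^ (b + 2))) r := by
  have hs : c + r ^ 2 ≠ 0 := by positivity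
  have hw : HasDerivAt (fun r : ℝ => (c + r ^ 2)⁻¹) (-2 * r * ((c + r ^ 2)⁻¹) ^ 2) r := by
    refine ((hasDerivAt_inv hs).comp r ((hasDerivAt_pow 2 r).const_add c)).congr_deriv ?_
    simp only [Nat.cast_ofNat, Nat.add_one_sub_one, pow_one, inv_pow]
    ring
  refine ((hasDerivAt_pow (a + 1) r).mul (hw.fun_pow (b + 1))).congr_deriv ?_
  simp only [Nat.add_sub_cancel, Nat.cast_add, Nat.cast_one]
  ring

theorem integral_Ioi_pow_add_two_mul_inv_add_sq_pow_succ (hc : 0 < c) {a b : ℕ}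
    (hab : a + 2 ≤ 2 * b) :
    ∫ r in Ioi 0, r ^ (a + 2) * ((c + r ^ 2)⁻¹) ^ (b + 1)
      = (a + 1) / (2 * b) * ∫ r in Ioi 0, r ^ a * ((c + r ^ 2)⁻¹) ^ b := by
  obtain ⟨b, rfl⟩ : ∃ b', b = b' + 1 := ⟨b - 1, by omega⟩
  have hlow := integrableOn_Ioi_pow_mul_inv_add_sq_pow hc hab
  have hhigh := integrableOn_Ioi_pow_mul_inv_add_sq_pow hc (a := a + 2) (b := b + 2) (by omega)
  have hftc := integral_Ioi_of_hasDerivAt_of_tendsto'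
    (fun r _ => hasDerivAt_pow_succ_mul_inv_add_sq_pow hc a b r)
    ((hlow.const_mul _).sub (hhigh.const_mul _))
    (tendsto_pow_mul_inv_add_sq_pow_atTop hc.le (by omega))
  rw [integral_sub (hlow.const_mul _) (hhigh.const_mul _), integral_const_mul,
    integral_const_mul] at hftc
  simp only [zero_pow (Nat.succ_ne_zero a), zero_mul, sub_zero] at hftc
  rw [div_mul_eq_mul_div, eq_div_iff (by positivity)]
  push_cast
  linarith

theorem integral_Ioi_bubble_gradient_eq_hardy (hc : 0 < c) (n : ℕ) :
    ∫ r in Ioi (0 : ℝ), r ^ (n + 2) * (r ^ 2 * ((c + r ^ 2)⁻¹) ^ (n + 5))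
      = ((n : ℝ) + 1) / (4 * ((n : ℝ) + 4))
        * ∫ r in Ioi (0 : ℝ), r ^ (n + 2) * (((c + r ^ 2)⁻¹) ^ (n + 3) / r ^ 2) := by
  have hgrad : ∫ r in Ioi (0 : ℝ), r ^ (n + 2) * (r ^ 2 * ((c + r ^ 2)⁻¹) ^ (n + 5))
      = ∫ r in Ioi (0 : ℝ), r ^ (n + 2 + 2) * ((c + r ^ 2)⁻¹) ^ (n + 4 + 1) :=
    setIntegral_congr_fun measurableSet_Ioi fun r _ => by ring
  have hhardy : ∫ r in Ioi (0 : ℝ), r ^ (n + 2) * (((c + r ^ 2)⁻¹) ^ (n + 3) / r ^ 2)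
      = ∫ r in Ioi (0 : ℝ), r ^ n * ((c + r ^ 2)⁻¹) ^ (n + 3) :=
    setIntegral_congr_fun measurableSet_Ioi fun r (hr : 0 < r) => by field_simp; ring
  rw [hgrad, hhardy, integral_Ioi_pow_add_two_mul_inv_add_sq_pow_succ hc (by omega),
    integral_Ioi_pow_add_two_mul_inv_add_sq_pow_succ hc (by omega)]
  push_cast
  field_simp
  ring

end RadialIntegrals

theorem stmt_1_general (N : ℕ) (hN : 3 ≤ N) (lam C : ℝ) (hlam : 0 < lam)
    (u : EuclideanSpace ℝ (Fin N) → ℝ)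
    (hu : ∀ x, u x = C * (lam / (lam ^ 2 + ‖x‖ ^ 2)) ^ ((N : ℝ) / 2)) :
    ∫ x : EuclideanSpace ℝ (Fin N), ‖gradient u x‖ ^ 2
      = (N : ℝ) ^ 2 * ((N : ℝ) - 2) / (4 * ((N : ℝ) + 1))
        * ∫ x : EuclideanSpace ℝ (Fin N), |u x| ^ 2 / ‖x‖ ^ 2 := by
  obtain ⟨n, rfl⟩ : ∃ n, N = n + 3 := ⟨N - 3, by omega⟩
  obtain rfl := funext hu
  simp only [norm_gradient_bubble_sq hlam, sq_abs, sq_bubble hlam, mul_div_assoc,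
    integral_const_mul]
  rw [integral_fun_norm_addHaar volume fun r => r ^ 2 * ((lam ^ 2 + r ^ 2)⁻¹) ^ (n + 3 + 2),
    integral_fun_norm_addHaar volume fun r => ((lam ^ 2 + r ^ 2)⁻¹) ^ (n + 3) / r ^ 2,
    finrank_euclideanSpace_fin, show n + 3 - 1 = n + 2 from rfl,
    show n + 3 + 2 = n + 5 from rfl]
  simp only [smul_eq_mul, nsmul_eq_mul]
  rw [integral_Ioi_bubble_gradient_eq_hardy (by positivity) n]
  push_cast
  field_simp
  ring

theorem stmt_1 (N : ℕ) (hN : 3 ≤ N) (lam C : ℝ) (hlam : 0 < lam) (hC : 0 < C)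
    (u : EuclideanSpace ℝ (Fin N) → ℝ)
    (hu : ∀ x, u x = C * (lam / (lam ^ 2 + ‖x‖ ^ 2)) ^ ((N : ℝ) / 2)) :
    ∫ x : EuclideanSpace ℝ (Fin N), ‖gradient u x‖ ^ 2
      = (N : ℝ) ^ 2 * ((N : ℝ) - 2) / (4 * ((N : ℝ) + 1))
        * ∫ x : EuclideanSpace ℝ (Fin N), |u x| ^ 2 / ‖x‖ ^ 2 :=
  stmt_1_general N hN lam C hlam u hu
end

section
/- Let N ≥ 3, λ > 0, and C ∈ ℝ, and define u(x) = C (λ/(λ² + |x|²))^{N/2}. Then −Δu(x) + (N(2|x|² − Nλ²)/((|x|²+λ²)²)) u(x) = 0 for every x ∈ ℝ^N. -/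
open MeasureTheory

/-- The Laplacian of `f : ℝ^N → ℝ` at `x`, as the sum of second partial derivatives
in the standard coordinate directions. -/
noncomputable def laplacian {N : ℕ} (f : EuclideanSpace ℝ (Fin N) → ℝ)
    (x : EuclideanSpace ℝ (Fin N)) : ℝ :=
  ∑ i : Fin N,
    fderiv ℝ (fun y => fderiv ℝ f y (EuclideanSpace.single i (1 : ℝ))) x
      (EuclideanSpace.single i (1 : ℝ))

/-!
The function `u` is radial, `u x = g (‖x‖²)` with `g t = C λ^{N/2} (λ² + t)^{-N/2}`, and for such
functions `Δu = 2N g'(‖x‖²) + 4‖x‖² g''(‖x‖²)`. With `s = λ² + t` one gets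
`2N g' + 4t g'' = C λ^{N/2} s^{-N/2-2} · N (2t - Nλ²)`, which is exactly the potential times `u`.
-/

open Real InnerProductSpace

section RadialCalculus

variable {E : Type*} [NormedAddCommGroup E] [InnerProductSpace ℝ E]
  {f f' f'' : ℝ → ℝ}

theorem fderiv_comp_norm_sq_apply (hf : ∀ t, 0 ≤ t → HasDerivAt f (f' t) t) (x v : E) :
    fderiv ℝ (fun y => f (‖y‖ ^ 2)) x v = 2 * f' (‖x‖ ^ 2) * ⟪x, v⟫_ℝ := by
  have h : HasFDerivAt (fun y : E => f (‖y‖ ^ 2)) (f' (‖x‖ ^ 2) • (2 • innerSL ℝ x)) x :=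
    (hf _ (sq_nonneg _)).comp_hasFDerivAt x (hasStrictFDerivAt_norm_sq x).hasFDerivAt
  rw [h.fderiv]
  simp only [smul_apply, innerSL_apply_apply, smul_eq_mul]
  ring

theorem fderiv_fderiv_comp_norm_sq_apply (hf : ∀ t, 0 ≤ t → HasDerivAt f (f' t) t)
    (hf' : ∀ t, 0 ≤ t → HasDerivAt f' (f'' t) t) (x v : E) :
    fderiv ℝ (fun y => fderiv ℝ (fun y => f (‖y‖ ^ 2)) y v) x v
      = 2 * f' (‖x‖ ^ 2) * ‖v‖ ^ 2 + 4 * f'' (‖x‖ ^ 2) * ⟪x, v⟫_ℝ ^ 2 := by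
  simp_rw [fderiv_comp_norm_sq_apply hf]
  have hf'_comp : HasFDerivAt (fun y : E => f' (‖y‖ ^ 2))
      (f'' (‖x‖ ^ 2) • (2 • innerSL ℝ x)) x :=
    (hf' _ (sq_nonneg _)).comp_hasFDerivAt x (hasStrictFDerivAt_norm_sq x).hasFDerivAt
  have hinner : HasFDerivAt (fun y : E => ⟪y, v⟫_ℝ) (innerSL ℝ v) x := by
    convert (innerSL ℝ v).hasFDerivAt using 1
    exact funext fun y => real_inner_comm v y
  rw [((hf'_comp.const_mul 2).fun_mul hinner).fderiv]
  simp only [add_apply, smul_apply, innerSL_apply_apply,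
    smul_eq_mul, real_inner_self_eq_norm_sq]
  ring

theorem laplacian_comp_norm_sq {N : ℕ} (hf : ∀ t, 0 ≤ t → HasDerivAt f (f' t) t)
    (hf' : ∀ t, 0 ≤ t → HasDerivAt f' (f'' t) t) (x : EuclideanSpace ℝ (Fin N)) :
    laplacian (fun y => f (‖y‖ ^ 2)) x
      = 2 * N * f' (‖x‖ ^ 2) + 4 * ‖x‖ ^ 2 * f'' (‖x‖ ^ 2) := by
  simp only [laplacian, fderiv_fderiv_comp_norm_sq_apply hf hf']
  simp only [PiLp.norm_single, norm_one, EuclideanSpace.inner_single_right, conj_trivial,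
    one_mul, one_pow, Finset.sum_add_distrib, Finset.sum_const, Finset.card_univ, Fintype.card_fin, nsmul_eq_mul, ← Finset.mul_sum,
    EuclideanSpace.real_norm_sq_eq]
  ring

end RadialCalculus

theorem hasDerivAt_const_mul_add_rpow (K r : ℝ) {a t : ℝ} (h : a + t ≠ 0) :
    HasDerivAt (fun t => K * (a + t) ^ r) (K * r * (a + t) ^ (r - 1)) t := by
  simpa only [one_mul, mul_assoc] using
    (((hasDerivAt_id' t).const_add a).rpow_const (p := r) (Or.inl h)).const_mul K

theorem stmt_6_general (N : ℕ) (lam : ℝ) (hlam : 0 < lam) (C : ℝ)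
    (u : EuclideanSpace ℝ (Fin N) → ℝ)
    (hu : ∀ x, u x = C * (lam / (lam ^ 2 + ‖x‖ ^ 2)) ^ ((N : ℝ) / 2)) :
    ∀ x : EuclideanSpace ℝ (Fin N),
      -laplacian u x
        + (N : ℝ) * (2 * ‖x‖ ^ 2 - (N : ℝ) * lam ^ 2) / (‖x‖ ^ 2 + lam ^ 2) ^ 2 * u x = 0 := by
  intro x
  set p : ℝ := (N : ℝ) / 2 with hp
  set K : ℝ := C * lam ^ p
  have hu_radial : u = fun y => K * (lam ^ 2 + ‖y‖ ^ 2) ^ (-p) := funext fun y => by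
    rw [hu, div_rpow hlam.le (by positivity), rpow_neg (by positivity)]
    ring
  rw [hu_radial, laplacian_comp_norm_sq
    (fun t ht => hasDerivAt_const_mul_add_rpow K (-p) (by positivity))
    (fun t ht => hasDerivAt_const_mul_add_rpow (K * -p) (-p - 1) (by positivity)) x]
  have hs : lam ^ 2 + ‖x‖ ^ 2 ≠ 0 := by positivity
  simp only [rpow_sub_one hs, add_comm (‖x‖ ^ 2) (lam ^ 2), hp]
  field_simp
  ring

theorem stmt_6 (N : ℕ) (hN : 3 ≤ N) (lam : ℝ) (hlam : 0 < lam) (C : ℝ)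
    (u : EuclideanSpace ℝ (Fin N) → ℝ)
    (hu : ∀ x, u x = C * (lam / (lam ^ 2 + ‖x‖ ^ 2)) ^ ((N : ℝ) / 2)) :
    ∀ x : EuclideanSpace ℝ (Fin N),
      -laplacian u x
        + (N : ℝ) * (2 * ‖x‖ ^ 2 - (N : ℝ) * lam ^ 2) / (‖x‖ ^ 2 + lam ^ 2) ^ 2 * u x = 0 :=
  stmt_6_general N lam hlam C u hu
end
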